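/- With the data of a relational reachability instance (MDP M, m ≥ n ≥ 1, rational q₁,…,q_m, states s₁,…,s_m, surjective index map k, target sets T₁,…,T_m), the achievable value set A = {Σ_{i=1}^m qᵢ · Pr^{σ_{k(i)}}_{sᵢ}(◇Tᵢ) : σ₁,…,σₙ ∈ HR} has a minimum v^min and a maximum v^max, given by v^min = Σ_{c=(s,·)∈Comb} min_{σ∈HR} Σ_{i∈ind(c)} qᵢ · Pr^σ_s(◇Tᵢ) and v^max = Σ_{c=(s,·)∈Comb} max_{σ∈HR} Σ_{i∈ind(c)} qᵢ · Pr^σ_s(◇Tᵢ) (all these optima being attained), and A equals the closed interval [v^min, v^max]. -/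

import Mathlib

open scoped BigOperators Classical
open Filter

/-- A finite history: an initial state together with a list of (action, next-state) steps. -/
abbrev Hist (S A : Type*) : Type _ := S × List (A × S)

/-- The last state of a history. -/
def Hist.last {S A : Type*} (π : Hist S A) : S :=
  (π.2.getLast?).elim π.1 Prod.snd

/-- A Markov decision process with finite state space `S` and finite action space `A`:
`P s a s'` is the transition probability, each state has at least one enabled action
(an action whose outgoing probabilities sum to `1`), and the outgoing probabilities
of a non-enabled action sum to `0`. -/
structure MDP (S A : Type*) [Fintype S] [Fintype A] where
  P : S → A → S → ℝ
  nonneg : ∀ s a s', 0 ≤ P s a s'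
  le_one : ∀ s a s', P s a s' ≤ 1
  sum_cases : ∀ s a, (∑ s', P s a s') = 1 ∨ (∑ s', P s a s') = 0
  exists_enabled : ∀ s, ∃ a, (∑ s', P s a s') = 1

namespace MDP

variable {S A : Type*} [Fintype S] [Fintype A]

/-- Action `a` is enabled in state `s`. -/
def enabled (M : MDP S A) (s : S) (a : A) : Prop := (∑ s', M.P s a s') = 1

/-- A state is absorbing if every enabled action loops on it with probability 1. -/
def Absorbing (M : MDP S A) (s : S) : Prop := ∀ a, M.enabled s a → M.P s a s = 1

end MDP

/-- A (history-dependent, randomized) scheduler for `M`: it assigns to every finite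
history a probability distribution over the actions enabled at its last state. -/
structure Scheduler {S A : Type*} [Fintype S] [Fintype A] (M : MDP S A) where
  choice : Hist S A → A → ℝ
  nonneg : ∀ π a, 0 ≤ choice π a
  sum_one : ∀ π, (∑ a, choice π a) = 1
  supp : ∀ π a, ¬ M.enabled (Hist.last π) a → choice π a = 0

namespace Scheduler

variable {S A : Type*} [Fintype S] [Fintype A] {M : MDP S A}

/-- A scheduler is memoryless if its choice only depends on the last state of the history. -/
def Memoryless (σ : Scheduler M) : Prop :=
  ∀ π π' : Hist S A, Hist.last π = Hist.last π' → σ.choice π = σ.choice π'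

/-- A scheduler is deterministic if all its choice probabilities are 0 or 1. -/
def Deterministic (σ : Scheduler M) : Prop :=
  ∀ π a, σ.choice π a = 0 ∨ σ.choice π a = 1

/-- Memoryless deterministic (MD) schedulers. -/
def MD (σ : Scheduler M) : Prop := σ.Memoryless ∧ σ.Deterministic

end Scheduler

/-- Probability of reaching the target set `T` within `n` steps, starting from history `π`,
under scheduler `σ`. -/
noncomputable def reachN {S A : Type*} [Fintype S] [Fintype A] (M : MDP S A)
    (σ : Scheduler M) (T : Set S) : ℕ → Hist S A → ℝ
  | 0, π => if Hist.last π ∈ T then 1 else 0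
  | n + 1, π =>
      if Hist.last π ∈ T then 1
      else ∑ a, σ.choice π a * ∑ s', M.P (Hist.last π) a s' *
        reachN M σ T n (π.1, π.2 ++ [(a, s')])

/-- `Pr M σ s T` is the probability of eventually reaching `T` from state `s` under
scheduler `σ`: the supremum of the step-bounded reachability probabilities. -/
noncomputable def Pr {S A : Type*} [Fintype S] [Fintype A] (M : MDP S A)
    (σ : Scheduler M) (s : S) (T : Set S) : ℝ :=
  ⨆ n : ℕ, reachN M σ T n (s, [])

/-- The set `Comb` of state-scheduler combinations `(sᵢ, k(i))` of a relational
reachability instance. -/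
noncomputable def combSet {S : Type*} [Fintype S] {m n : ℕ}
    (s : Fin m → S) (k : Fin m → Fin n) : Finset (S × Fin n) :=
  Finset.image (fun i => (s i, k i)) Finset.univ

/-- The contribution `Σ_{i ∈ ind(c)} qᵢ · Pr^σ_{c.1}(◇Tᵢ)` of a state-scheduler
combination `c` under a scheduler `σ`. -/
noncomputable def combVal {S A : Type*} [Fintype S] [Fintype A] {m n : ℕ}
    (M : MDP S A) (q : Fin m → ℚ) (s : Fin m → S) (k : Fin m → Fin n)
    (T : Fin m → Set S) (σ : Scheduler M) (c : S × Fin n) : ℝ :=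
  ∑ i ∈ Finset.univ.filter (fun i => (s i, k i) = c), (q i : ℝ) * Pr M σ c.1 (T i)

/-- `v^min`: the sum over all combinations `c` of the infimum over all schedulers of the
contribution of `c`. -/
noncomputable def vMin {S A : Type*} [Fintype S] [Fintype A] {m n : ℕ}
    (M : MDP S A) (q : Fin m → ℚ) (s : Fin m → S) (k : Fin m → Fin n)
    (T : Fin m → Set S) : ℝ :=
  ∑ c ∈ combSet s k, sInf {x : ℝ | ∃ σ : Scheduler M, x = combVal M q s k T σ c}

/-- `v^max`: the sum over all combinations `c` of the supremum over all schedulers of the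
contribution of `c`. -/
noncomputable def vMax {S A : Type*} [Fintype S] [Fintype A] {m n : ℕ}
    (M : MDP S A) (q : Fin m → ℚ) (s : Fin m → S) (k : Fin m → Fin n)
    (T : Fin m → Set S) : ℝ :=
  ∑ c ∈ combSet s k, sSup {x : ℝ | ∃ σ : Scheduler M, x = combVal M q s k T σ c}

/-- The achievable value set
`A = {Σ_{i} qᵢ · Pr^{σ_{k(i)}}_{sᵢ}(◇Tᵢ) : σ₁,…,σₙ ∈ HR}`. -/
noncomputable def achSet {S A : Type*} [Fintype S] [Fintype A] {m n : ℕ}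
    (M : MDP S A) (q : Fin m → ℚ) (s : Fin m → S) (k : Fin m → Fin n)
    (T : Fin m → Set S) : Set ℝ :=
  {x : ℝ | ∃ σ : Fin n → Scheduler M,
    x = ∑ i, (q i : ℝ) * Pr M (σ (k i)) (s i) (T i)}

/-!
The extremal values split over the state-scheduler combinations: the schedulers of combinations
sharing a scheduler index can be merged into one that branches on the initial state, so it
suffices that the value of each combination, a signed weighted sum `∑ i, wᵢ · Pr^σ_s(◇Tᵢ)` for a
single scheduler, attains its optimum. Tracking the set of targets visited so far turns this
value into an expected total reward, each transition earning the weight of the targets it enters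
for the first time. For a discount factor `γ < 1` the Bellman operator of that reward is a
contraction and a greedy memoryless deterministic scheduler is optimal; there are finitely many
such schedulers, so one of them is optimal for `γ` arbitrarily close to `1`, and discounted
reachability tends to reachability as `γ → 1`. The achievable set is convex because two
schedulers can be mixed history by history, weighting their choices by the probabilities of the
history under each; hence it is the whole interval between its extrema.
-/

open Topology

namespace Hist

variable {S A : Type*}

def snoc (π : Hist S A) (a : A) (s' : S) : Hist S A := (π.1, π.2 ++ [(a, s')])

@[simp] lemma last_snoc (π : Hist S A) (a : A) (s' : S) : (π.snoc a s').last = s' := by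
  simp [snoc, Hist.last]

@[simp] lemma fst_snoc (π : Hist S A) (a : A) (s' : S) : (π.snoc a s').1 = π.1 := rfl

@[simp] lemma last_nil (s : S) : Hist.last ((s, []) : Hist S A) = s := rfl

lemma last_cons (s₀ : S) (a : A) (s' : S) (l : List (A × S)) :
    Hist.last ((s₀, (a, s') :: l) : Hist S A) = Hist.last ((s', l) : Hist S A) := by
  cases l using List.reverseRecOn with
  | nil => rfl
  | append_singleton l x =>
    rw [← List.cons_append]
    simp only [Hist.last, List.getLast?_append, List.getLast?_singleton]
    rfl

end Hist

lemma MDP.sum_P_le_one {S A : Type*} [Fintype S] [Fintype A] (M : MDP S A) (s : S) (a : A) :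
    ∑ s', M.P s a s' ≤ 1 := by
  rcases M.sum_cases s a with h | h <;> simp [h]

namespace Scheduler

variable {S A : Type*} [Fintype S] [Fintype A] {M : MDP S A} (σ : Scheduler M) (π : Hist S A)

lemma sum_choice_mul_le {g : A → ℝ} {c : ℝ} (h : ∀ a, M.enabled π.last a → g a ≤ c) :
    ∑ a, σ.choice π a * g a ≤ c :=
  calc ∑ a, σ.choice π a * g a ≤ ∑ a, σ.choice π a * c :=
        Finset.sum_le_sum fun a _ => by
          by_cases ha : M.enabled π.last a
          · exact mul_le_mul_of_nonneg_left (h a ha) (σ.nonneg π a)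
          · simp [σ.supp π a ha]
    _ = c := by rw [← Finset.sum_mul, σ.sum_one, one_mul]

lemma sum_choice_sum_P_le (f : A → S → ℝ) {c : ℝ} (hc : 0 ≤ c) (hf : ∀ a s', f a s' ≤ c) :
    ∑ a, σ.choice π a * ∑ s', M.P π.last a s' * f a s' ≤ c :=
  σ.sum_choice_mul_le π fun a _ =>
    calc ∑ s', M.P π.last a s' * f a s' ≤ ∑ s', M.P π.last a s' * c :=
          Finset.sum_le_sum fun s' _ => mul_le_mul_of_nonneg_left (hf a s') (M.nonneg _ _ _)
      _ ≤ c := by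
          rw [← Finset.sum_mul]
          exact mul_le_of_le_one_left hc (M.sum_P_le_one _ _)

lemma sum_choice_sum_P_nonneg (f : A → S → ℝ) (hf : ∀ a s', 0 ≤ f a s') :
    0 ≤ ∑ a, σ.choice π a * ∑ s', M.P π.last a s' * f a s' :=
  Finset.sum_nonneg fun a _ => mul_nonneg (σ.nonneg π a)
    (Finset.sum_nonneg fun s' _ => mul_nonneg (M.nonneg _ _ _) (hf a s'))

lemma sum_choice_sum_P_mono {f g : A → S → ℝ} (h : ∀ a s', f a s' ≤ g a s') :
    ∑ a, σ.choice π a * ∑ s', M.P π.last a s' * f a s'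
      ≤ ∑ a, σ.choice π a * ∑ s', M.P π.last a s' * g a s' :=
  Finset.sum_le_sum fun a _ => mul_le_mul_of_nonneg_left
    (Finset.sum_le_sum fun s' _ => mul_le_mul_of_nonneg_left (h a s') (M.nonneg _ _ _))
    (σ.nonneg π a)

lemma mul_sum_choice_sum_P (c : ℝ) (f : A → S → ℝ) :
    c * ∑ a, σ.choice π a * ∑ s', M.P π.last a s' * f a s'
      = ∑ a, σ.choice π a * ∑ s', M.P π.last a s' * (c * f a s') := by
  simp only [Finset.mul_sum]
  exact Finset.sum_congr rfl fun a _ => Finset.sum_congr rfl fun s' _ => by ring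

end Scheduler

section DiscountedReachability

variable {S A : Type*} [Fintype S] [Fintype A] {M : MDP S A}

/-- Step-bounded reachability in which a visit after `k` steps only counts `γ ^ k`. -/
noncomputable def discReachN (M : MDP S A) (σ : Scheduler M) (U : Set S) (γ : ℝ) :
    ℕ → Hist S A → ℝ
  | 0, π => if π.last ∈ U then 1 else 0
  | n + 1, π =>
      if π.last ∈ U then 1
      else γ * ∑ a, σ.choice π a * ∑ s', M.P π.last a s' * discReachN M σ U γ n (π.snoc a s')

noncomputable def discPr (M : MDP S A) (σ : Scheduler M) (s : S) (U : Set S) (γ : ℝ) : ℝ :=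
  ⨆ n, discReachN M σ U γ n (s, [])

variable (σ : Scheduler M) (U : Set S) {γ : ℝ}

lemma discReachN_succ (n : ℕ) (π : Hist S A) :
    discReachN M σ U γ (n + 1) π = if π.last ∈ U then 1
      else γ * ∑ a, σ.choice π a * ∑ s', M.P π.last a s' * discReachN M σ U γ n (π.snoc a s') :=
  rfl

lemma discReachN_of_mem {π : Hist S A} (h : π.last ∈ U) (n : ℕ) :
    discReachN M σ U γ n π = 1 := by
  cases n <;> simp [discReachN, h]

lemma reachN_succ (n : ℕ) (π : Hist S A) :
    reachN M σ U (n + 1) π = if π.last ∈ U then 1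
      else ∑ a, σ.choice π a * ∑ s', M.P π.last a s' * reachN M σ U n (π.snoc a s') :=
  rfl

lemma reachN_eq_discReachN_one (n : ℕ) (π : Hist S A) :
    reachN M σ U n π = discReachN M σ U 1 n π := by
  induction n generalizing π with
  | zero => rfl
  | succ n ih => simp only [reachN, discReachN_succ, one_mul, ih]; rfl

lemma Pr_eq_discPr_one (s : S) : Pr M σ s U = discPr M σ s U 1 := by
  simp only [Pr, discPr, reachN_eq_discReachN_one]

lemma discReachN_nonneg (hγ : 0 ≤ γ) (n : ℕ) (π : Hist S A) : 0 ≤ discReachN M σ U γ n π := by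
  induction n generalizing π with
  | zero => simp only [discReachN]; split <;> norm_num
  | succ n ih =>
    rw [discReachN_succ]
    split
    · exact zero_le_one
    · exact mul_nonneg hγ (σ.sum_choice_sum_P_nonneg π _ fun a s' => ih _)

lemma discReachN_le_one (hγ₀ : 0 ≤ γ) (hγ₁ : γ ≤ 1) (n : ℕ) (π : Hist S A) :
    discReachN M σ U γ n π ≤ 1 := by
  induction n generalizing π with
  | zero => simp only [discReachN]; split <;> norm_num
  | succ n ih =>
    rw [discReachN_succ]
    split
    · exact le_rfl
    · exact mul_le_one₀ hγ₁
        (σ.sum_choice_sum_P_nonneg π _ fun a s' => discReachN_nonneg σ U hγ₀ n _)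
        (σ.sum_choice_sum_P_le π _ zero_le_one fun a s' => ih _)

lemma discReachN_le_succ (hγ : 0 ≤ γ) (n : ℕ) (π : Hist S A) :
    discReachN M σ U γ n π ≤ discReachN M σ U γ (n + 1) π := by
  induction n generalizing π with
  | zero =>
    rw [discReachN_succ]
    simp only [discReachN]
    split
    · exact le_rfl
    · exact mul_nonneg hγ (σ.sum_choice_sum_P_nonneg π _ fun a s' => by split <;> norm_num)
  | succ n ih =>
    rw [discReachN_succ, discReachN_succ]
    split
    · exact le_rfl
    · exact mul_le_mul_of_nonneg_left (σ.sum_choice_sum_P_mono π fun a s' => ih _) hγ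

lemma discReachN_mono_discount {γ' : ℝ} (hγ : 0 ≤ γ) (hγγ' : γ ≤ γ') (n : ℕ) (π : Hist S A) :
    discReachN M σ U γ n π ≤ discReachN M σ U γ' n π := by
  induction n generalizing π with
  | zero => rfl
  | succ n ih =>
    rw [discReachN_succ, discReachN_succ]
    split
    · exact le_rfl
    · exact mul_le_mul hγγ' (σ.sum_choice_sum_P_mono π fun a s' => ih _)
        (σ.sum_choice_sum_P_nonneg π _ fun a s' => discReachN_nonneg σ U hγ n _)
        (hγ.trans hγγ')

lemma pow_mul_reachN_le_discReachN (hγ₀ : 0 ≤ γ) (hγ₁ : γ ≤ 1) (n : ℕ) (π : Hist S A) :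
    γ ^ n * reachN M σ U n π ≤ discReachN M σ U γ n π := by
  induction n generalizing π with
  | zero => simp [reachN, discReachN]
  | succ n ih =>
    rw [reachN_eq_discReachN_one, discReachN_succ, discReachN_succ]
    split
    · simpa using pow_le_one₀ hγ₀ hγ₁
    · rw [one_mul, pow_succ', mul_assoc, σ.mul_sum_choice_sum_P]
      refine mul_le_mul_of_nonneg_left (σ.sum_choice_sum_P_mono π fun a s' => ?_) hγ₀
      simpa only [reachN_eq_discReachN_one] using ih _

lemma bddAbove_range_discReachN (hγ₀ : 0 ≤ γ) (hγ₁ : γ ≤ 1) (π : Hist S A) :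
    BddAbove (Set.range fun n => discReachN M σ U γ n π) :=
  ⟨1, by rintro _ ⟨n, rfl⟩; exact discReachN_le_one σ U hγ₀ hγ₁ n π⟩

lemma tendsto_discReachN_discPr (hγ₀ : 0 ≤ γ) (hγ₁ : γ ≤ 1) (s : S) :
    Tendsto (fun n => discReachN M σ U γ n (s, [])) atTop (𝓝 (discPr M σ s U γ)) :=
  tendsto_atTop_ciSup (monotone_nat_of_le_succ fun n => discReachN_le_succ σ U hγ₀ n _)
    (bddAbove_range_discReachN σ U hγ₀ hγ₁ _)

lemma discReachN_le_discPr (hγ₀ : 0 ≤ γ) (hγ₁ : γ ≤ 1) (s : S) (n : ℕ) :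
    discReachN M σ U γ n (s, []) ≤ discPr M σ s U γ :=
  le_ciSup (bddAbove_range_discReachN σ U hγ₀ hγ₁ _) n

lemma discPr_le_Pr (hγ₀ : 0 ≤ γ) (hγ₁ : γ ≤ 1) (s : S) : discPr M σ s U γ ≤ Pr M σ s U := by
  rw [Pr_eq_discPr_one]
  exact ciSup_mono (bddAbove_range_discReachN σ U zero_le_one le_rfl _)
    fun n => discReachN_mono_discount σ U hγ₀ hγ₁ n _

lemma tendsto_reachN_Pr (s : S) :
    Tendsto (fun n => reachN M σ U n (s, [])) atTop (𝓝 (Pr M σ s U)) := by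
  simpa only [Pr_eq_discPr_one, reachN_eq_discReachN_one] using
    tendsto_discReachN_discPr σ U zero_le_one le_rfl s

theorem tendsto_discPr_nhdsLT_one (s : S) :
    Tendsto (fun γ => discPr M σ s U γ) (𝓝[<] 1) (𝓝 (Pr M σ s U)) := by
  have hγ : ∀ᶠ γ in 𝓝[<] (1 : ℝ), γ ∈ Set.Ioo 0 1 := Ioo_mem_nhdsLT zero_lt_one
  refine tendsto_order.2 ⟨fun a ha => ?_, fun a ha => ?_⟩
  · obtain ⟨n, hn⟩ := ((tendsto_reachN_Pr σ U s).eventually (lt_mem_nhds ha)).exists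
    have hpow : Tendsto (fun γ : ℝ => γ ^ n * reachN M σ U n (s, [])) (𝓝[<] 1)
        (𝓝 (reachN M σ U n (s, []))) := by
      simpa using (((continuous_pow n).tendsto 1).mono_left nhdsWithin_le_nhds).mul_const
        (reachN M σ U n (s, []))
    filter_upwards [hpow.eventually (lt_mem_nhds hn), hγ] with γ hlt hγ
    exact hlt.trans_le ((pow_mul_reachN_le_discReachN σ U hγ.1.le hγ.2.le n _).trans
      (discReachN_le_discPr σ U hγ.1.le hγ.2.le s n))
  · filter_upwards [hγ] with γ hγ
    exact (discPr_le_Pr σ U hγ.1.le hγ.2.le s).trans_lt ha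

end DiscountedReachability

/-- The memoryless deterministic schedulers, as choices of an enabled action in every state. -/
abbrev MDP.Selector {S A : Type*} [Fintype S] [Fintype A] (M : MDP S A) : Type _ :=
  {f : S → A // ∀ s, M.enabled s (f s)}

namespace Scheduler

variable {S A : Type*} [Fintype S] [Fintype A] {M : MDP S A}

noncomputable def ofSelector (f : M.Selector) : Scheduler M where
  choice π a := if a = f.1 π.last then 1 else 0
  nonneg π a := by split <;> norm_num
  sum_one π := by simp
  supp π a h := if_neg fun (ha : a = f.1 π.last) => h (ha ▸ f.2 _)

lemma sum_ofSelector_choice_mul (f : M.Selector) (π : Hist S A) (g : A → ℝ) :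
    ∑ a, (ofSelector f).choice π a * g a = g (f.1 π.last) := by
  simp [ofSelector]

def byInitial (F : S → Scheduler M) : Scheduler M where
  choice π := (F π.1).choice π
  nonneg π := (F π.1).nonneg π
  sum_one π := (F π.1).sum_one π
  supp π := (F π.1).supp π

/-- `σ.weightFrom s₀ pre l` is the probability that `σ`, having produced the history
`(s₀, pre)`, next chooses the actions recorded in `l`. -/
noncomputable def weightFrom (σ : Scheduler M) (s₀ : S) :
    List (A × S) → List (A × S) → ℝ
  | _, [] => 1
  | pre, x :: rest => σ.choice (s₀, pre) x.1 * σ.weightFrom s₀ (pre ++ [x]) rest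

noncomputable def weight (σ : Scheduler M) (π : Hist S A) : ℝ := σ.weightFrom π.1 [] π.2

variable (σ τ : Scheduler M)

lemma weightFrom_nonneg (s₀ : S) (pre l : List (A × S)) : 0 ≤ σ.weightFrom s₀ pre l := by
  induction l generalizing pre with
  | nil => exact zero_le_one
  | cons x l ih => exact mul_nonneg (σ.nonneg _ _) (ih _)

lemma weightFrom_append_singleton (s₀ : S) (pre l : List (A × S)) (x : A × S) :
    σ.weightFrom s₀ pre (l ++ [x]) = σ.weightFrom s₀ pre l * σ.choice (s₀, pre ++ l) x.1 := by
  induction l generalizing pre with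
  | nil => simp [weightFrom]
  | cons y l ih => simp [weightFrom, ih, mul_assoc]

@[simp] lemma weight_nil (s : S) : σ.weight (s, []) = 1 := rfl

lemma weight_nonneg (π : Hist S A) : 0 ≤ σ.weight π := σ.weightFrom_nonneg _ _ _

lemma weight_snoc (π : Hist S A) (a : A) (s' : S) :
    σ.weight (π.snoc a s') = σ.weight π * σ.choice π a :=
  σ.weightFrom_append_singleton _ _ _ _

variable {t : ℝ}

/-- The scheduler behaving as `σ` with probability `t` and as `τ` with probability `1 - t`: at
each history it mixes the two choices in proportion to the probabilities with which `σ` and `τ`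
produce that history (on histories produced by neither, the choice is irrelevant). -/
noncomputable def mix (ht : t ∈ Set.Icc (0 : ℝ) 1) : Scheduler M where
  choice π a :=
    if t * σ.weight π + (1 - t) * τ.weight π = 0 then σ.choice π a
    else (t * σ.weight π * σ.choice π a + (1 - t) * τ.weight π * τ.choice π a) /
      (t * σ.weight π + (1 - t) * τ.weight π)
  nonneg π a := by
    have := σ.weight_nonneg π; have := τ.weight_nonneg π
    have := σ.nonneg π a; have := τ.nonneg π a
    have := ht.1; have : 0 ≤ 1 - t := sub_nonneg.2 ht.2
    split <;> positivity
  sum_one π := by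
    split
    · exact σ.sum_one π
    · rw [← Finset.sum_div, div_eq_one_iff_eq ‹_›, Finset.sum_add_distrib, ← Finset.mul_sum,
        ← Finset.mul_sum, σ.sum_one, τ.sum_one, mul_one, mul_one]
  supp π a h := by
    split
    · exact σ.supp π a h
    · rw [σ.supp π a h, τ.supp π a h]; simp

variable {σ τ}

lemma mul_mix_choice (ht : t ∈ Set.Icc (0 : ℝ) 1) (π : Hist S A) (a : A) :
    (t * σ.weight π + (1 - t) * τ.weight π) * (σ.mix τ ht).choice π a
      = t * σ.weight π * σ.choice π a + (1 - t) * τ.weight π * τ.choice π a := by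
  simp only [mix]
  split
  · rename_i hD
    have h₁ : 0 ≤ t * σ.weight π := mul_nonneg ht.1 (σ.weight_nonneg π)
    have h₂ : 0 ≤ (1 - t) * τ.weight π := mul_nonneg (sub_nonneg.2 ht.2) (τ.weight_nonneg π)
    rw [hD, show t * σ.weight π = 0 by linarith, show (1 - t) * τ.weight π = 0 by linarith]
    ring
  · exact mul_div_cancel₀ _ ‹_›

lemma weight_mix (ht : t ∈ Set.Icc (0 : ℝ) 1) (π : Hist S A) :
    (σ.mix τ ht).weight π = t * σ.weight π + (1 - t) * τ.weight π := by
  obtain ⟨s₀, l⟩ := π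
  induction l using List.reverseRecOn with
  | nil => simp
  | append_singleton l x ih =>
    rw [show ((s₀, l ++ [x]) : Hist S A) = Hist.snoc (s₀, l) x.1 x.2 from rfl, weight_snoc,
      weight_snoc, weight_snoc, ih, mul_mix_choice]
    ring

end Scheduler

section SchedulerConstructions

variable {S A : Type*} [Fintype S] [Fintype A] {M : MDP S A}

lemma reachN_congr_of_fst_eq {σ τ : Scheduler M} {U : Set S} {s₀ : S}
    (h : ∀ π : Hist S A, π.1 = s₀ → σ.choice π = τ.choice π) (n : ℕ) {π : Hist S A}
    (hπ : π.1 = s₀) : reachN M σ U n π = reachN M τ U n π := by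
  induction n generalizing π with
  | zero => rfl
  | succ n ih => simp only [reachN_succ, h π hπ, Hist.fst_snoc, hπ, ih]

lemma Pr_byInitial (F : S → Scheduler M) (s : S) (U : Set S) :
    Pr M (Scheduler.byInitial F) s U = Pr M (F s) s U := by
  unfold Pr
  congr! 2 with n
  exact reachN_congr_of_fst_eq (fun π hπ => by simp [Scheduler.byInitial, hπ]) n rfl

variable {σ τ : Scheduler M} {t : ℝ}

lemma weight_mul_reachN_mix (ht : t ∈ Set.Icc (0 : ℝ) 1) (U : Set S) (n : ℕ) (π : Hist S A) :
    (σ.mix τ ht).weight π * reachN M (σ.mix τ ht) U n π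
      = t * (σ.weight π * reachN M σ U n π) + (1 - t) * (τ.weight π * reachN M τ U n π) := by
  induction n generalizing π with
  | zero =>
    simp only [reachN, Scheduler.weight_mix]
    split <;> ring
  | succ n ih =>
    simp only [reachN_succ]
    split
    · rw [Scheduler.weight_mix]; ring
    · simp only [Finset.mul_sum, ← Finset.sum_add_distrib]
      refine Finset.sum_congr rfl fun a _ => Finset.sum_congr rfl fun s' _ => ?_
      have h := ih (π.snoc a s')
      simp only [Scheduler.weight_snoc] at h
      linear_combination M.P π.last a s' * h

lemma Pr_mix (ht : t ∈ Set.Icc (0 : ℝ) 1) (s : S) (U : Set S) :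
    Pr M (σ.mix τ ht) s U = t * Pr M σ s U + (1 - t) * Pr M τ s U := by
  have hreach : ∀ n, reachN M (σ.mix τ ht) U n (s, [])
      = t * reachN M σ U n (s, []) + (1 - t) * reachN M τ U n (s, []) := fun n => by
    simpa using weight_mul_reachN_mix ht U n (s, [])
  refine tendsto_nhds_unique (tendsto_reachN_Pr _ U s) ?_
  simp only [hreach]
  exact ((tendsto_reachN_Pr σ U s).const_mul t).add ((tendsto_reachN_Pr τ U s).const_mul _)

end SchedulerConstructions

namespace MDP

variable {S A : Type*} [Fintype S] [Fintype A] (M : MDP S A)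

noncomputable def enabledActions (s : S) : Finset A := Finset.univ.filter (M.enabled s)

lemma enabledActions_nonempty (s : S) : (M.enabledActions s).Nonempty :=
  let ⟨a, ha⟩ := M.exists_enabled s
  ⟨a, Finset.mem_filter.2 ⟨Finset.mem_univ a, ha⟩⟩

noncomputable def bellman (r : S → S → ℝ) (γ : ℝ) (x : S → ℝ) (s : S) : ℝ :=
  (M.enabledActions s).sup' (M.enabledActions_nonempty s)
    fun a => γ * ∑ s', M.P s a s' * (r s s' + x s')

variable {M} {r : S → S → ℝ} {γ : ℝ}

lemma bellman_le_add {x y : S → ℝ} {d : ℝ} (hγ : 0 ≤ γ) (hd : 0 ≤ d)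
    (hxy : ∀ s, x s ≤ y s + d) (s : S) : M.bellman r γ x s ≤ M.bellman r γ y s + γ * d := by
  refine Finset.sup'_le _ _ fun a ha => le_trans ?_ (add_le_add_left
    (Finset.le_sup' (fun a => γ * ∑ s', M.P s a s' * (r s s' + y s')) ha) _)
  have hP : ∑ s', M.P s a s' * d ≤ d := by
    rw [← Finset.sum_mul]; exact mul_le_of_le_one_left hd (M.sum_P_le_one s a)
  have hsum : ∑ s', M.P s a s' * (r s s' + x s')
      ≤ ∑ s', M.P s a s' * (r s s' + y s') + ∑ s', M.P s a s' * d := by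
    rw [← Finset.sum_add_distrib]
    refine Finset.sum_le_sum fun s' _ => ?_
    rw [← mul_add]
    exact mul_le_mul_of_nonneg_left (by linarith [hxy s']) (M.nonneg _ _ _)
  nlinarith

lemma lipschitzWith_bellman (hγ : 0 ≤ γ) : LipschitzWith ⟨γ, hγ⟩ (M.bellman r γ) := by
  refine LipschitzWith.of_dist_le_mul fun x y => ?_
  change _ ≤ γ * _
  refine (dist_pi_le_iff (by positivity)).2 fun s => ?_
  have hle : ∀ (x y : S → ℝ) s, x s ≤ y s + dist x y := fun x y s =>
    by linarith [(abs_sub_le_iff.1 ((Real.dist_eq _ _).symm ▸ dist_le_pi_dist x y s)).1]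
  have hxy := bellman_le_add hγ dist_nonneg (hle x y) s (M := M) (r := r)
  have hyx := bellman_le_add hγ dist_nonneg (hle y x) s (M := M) (r := r)
  rw [dist_comm] at hyx
  rw [Real.dist_eq, abs_sub_le_iff]
  constructor <;> linarith

lemma contractingWith_bellman (hγ : γ ∈ Set.Ico 0 1) :
    ContractingWith ⟨γ, hγ.1⟩ (M.bellman r γ) :=
  ⟨hγ.2, lipschitzWith_bellman hγ.1⟩

noncomputable def optValue (M : MDP S A) (r : S → S → ℝ) (hγ : γ ∈ Set.Ico 0 1) : S → ℝ :=
  ContractingWith.fixedPoint (M.bellman r γ) (contractingWith_bellman hγ)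

lemma bellman_optValue (hγ : γ ∈ Set.Ico 0 1) :
    M.bellman r γ (M.optValue r hγ) = M.optValue r hγ :=
  ContractingWith.fixedPoint_isFixedPt _

lemma tendsto_bellman_iterate (hγ : γ ∈ Set.Ico 0 1) (s : S) :
    Tendsto (fun n => (M.bellman r γ)^[n] 0 s) atTop (𝓝 (M.optValue r hγ s)) :=
  tendsto_pi_nhds.1 ((contractingWith_bellman hγ).tendsto_iterate_fixedPoint 0) s

lemma exists_selector_bellman_eq (x : S → ℝ) : ∃ f : M.Selector, ∀ s,
    M.bellman r γ x s = γ * ∑ s', M.P s (f.1 s) s' * (r s s' + x s') := by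
  choose f hf using fun s => Finset.exists_mem_eq_sup' (M.enabledActions_nonempty s)
    fun a => γ * ∑ s', M.P s a s' * (r s s' + x s')
  exact ⟨⟨f, fun s => (Finset.mem_filter.1 (hf s).1).2⟩, fun s => (hf s).2⟩

end MDP

section DiscountedReward

variable {S A : Type*} [Fintype S] [Fintype A] {M : MDP S A}

/-- Expected reward of the first `n` steps, the transition `s → s'` taken at step `k + 1`
earning `γ ^ (k + 1) * r s s'`. -/
noncomputable def discRewardN (M : MDP S A) (σ : Scheduler M) (r : S → S → ℝ) (γ : ℝ) :
    ℕ → Hist S A → ℝ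
  | 0, _ => 0
  | n + 1, π => γ * ∑ a, σ.choice π a * ∑ s', M.P π.last a s' *
      (r π.last s' + discRewardN M σ r γ n (π.snoc a s'))

variable {r : S → S → ℝ} {γ : ℝ}

lemma discRewardN_le_bellman_iterate (σ : Scheduler M) (hγ : 0 ≤ γ) (n : ℕ) (π : Hist S A) :
    discRewardN M σ r γ n π ≤ (M.bellman r γ)^[n] 0 π.last := by
  induction n generalizing π with
  | zero => simp [discRewardN]
  | succ n ih =>
    rw [Function.iterate_succ_apply', discRewardN, Finset.mul_sum]
    simp only [mul_left_comm γ]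
    refine σ.sum_choice_mul_le π fun a ha => le_trans ?_ (Finset.le_sup'
      (fun a => γ * ∑ s', M.P π.last a s' * (r π.last s' + (M.bellman r γ)^[n] 0 s'))
      (Finset.mem_filter.2 ⟨Finset.mem_univ a, ha⟩))
    refine mul_le_mul_of_nonneg_left (Finset.sum_le_sum fun s' _ => ?_) hγ
    have := ih (π.snoc a s')
    rw [Hist.last_snoc] at this
    exact mul_le_mul_of_nonneg_left (by linarith) (M.nonneg _ _ _)

lemma le_optValue_of_tendsto {σ : Scheduler M} (hγ : γ ∈ Set.Ico 0 1) {π : Hist S A} {L : ℝ}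
    (hL : Tendsto (fun n => discRewardN M σ r γ n π) atTop (𝓝 L)) :
    L ≤ M.optValue r hγ π.last :=
  le_of_tendsto_of_tendsto' hL (MDP.tendsto_bellman_iterate hγ _)
    fun n => discRewardN_le_bellman_iterate σ hγ.1 n π

lemma abs_discRewardN_ofSelector_sub_le {f : M.Selector} {x : S → ℝ}
    (hx : ∀ s, x s = γ * ∑ s', M.P s (f.1 s) s' * (r s s' + x s')) (hγ : 0 ≤ γ) (n : ℕ)
    (π : Hist S A) :
    |discRewardN M (Scheduler.ofSelector f) r γ n π - x π.last| ≤ γ ^ n * ‖x‖ := by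
  induction n generalizing π with
  | zero => simpa [discRewardN] using norm_le_pi_norm x π.last
  | succ n ih =>
    set σ := Scheduler.ofSelector f
    set P := M.P π.last (f.1 π.last)
    rw [discRewardN, Scheduler.sum_ofSelector_choice_mul, hx π.last, ← mul_sub,
      ← Finset.sum_sub_distrib, abs_mul, abs_of_nonneg hγ, pow_succ', mul_assoc]
    refine mul_le_mul_of_nonneg_left ?_ hγ
    calc |∑ s', (P s' * (r π.last s' + discRewardN M σ r γ n (π.snoc (f.1 π.last) s'))
            - P s' * (r π.last s' + x s'))|
        ≤ ∑ s', P s' * (γ ^ n * ‖x‖) := by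
          refine (Finset.abs_sum_le_sum_abs _ _).trans (Finset.sum_le_sum fun s' _ => ?_)
          rw [← mul_sub, abs_mul, abs_of_nonneg (M.nonneg _ _ _), add_sub_add_left_eq_sub]
          have := ih (π.snoc (f.1 π.last) s')
          rw [Hist.last_snoc] at this
          exact mul_le_mul_of_nonneg_left this (M.nonneg _ _ _)
      _ ≤ γ ^ n * ‖x‖ := by
          rw [← Finset.sum_mul]
          exact mul_le_of_le_one_left (by positivity) (M.sum_P_le_one _ _)

lemma exists_selector_tendsto_optValue (hγ : γ ∈ Set.Ico 0 1) :
    ∃ f : M.Selector, ∀ π : Hist S A,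
      Tendsto (fun n => discRewardN M (Scheduler.ofSelector f) r γ n π) atTop
        (𝓝 (M.optValue r hγ π.last)) := by
  obtain ⟨f, hf⟩ := MDP.exists_selector_bellman_eq (M := M) (r := r) (γ := γ) (M.optValue r hγ)
  refine ⟨f, fun π => ?_⟩
  have hx : ∀ s, M.optValue r hγ s
      = γ * ∑ s', M.P s (f.1 s) s' * (r s s' + M.optValue r hγ s') :=
    fun s => by rw [← hf s, MDP.bellman_optValue]
  have hpow : Tendsto (fun n => γ ^ n * ‖M.optValue r hγ‖) atTop (𝓝 0) := by
    simpa using (tendsto_pow_atTop_nhds_zero_of_lt_one hγ.1 hγ.2).mul_const ‖M.optValue r hγ‖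
  exact tendsto_iff_norm_sub_tendsto_zero.2 (squeeze_zero (fun _ => norm_nonneg _)
    (fun n => abs_discRewardN_ofSelector_sub_le hx hγ.1 n π) hpow)

end DiscountedReward

section VisitHistories

variable {S A ι : Type*} [Fintype ι] {T : ι → Set S}

noncomputable def targetsAt (T : ι → Set S) (s : S) : Finset ι := Finset.univ.filter (s ∈ T ·)

lemma mem_targetsAt {s : S} {i : ι} : i ∈ targetsAt T s ↔ s ∈ T i := by
  simp [targetsAt]

noncomputable def visitsAfter (T : ι → Set S) : Finset ι → List (A × S) → Finset ι
  | v, [] => v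
  | v, (_, s') :: l => visitsAfter T (v ∪ targetsAt T s') l

noncomputable def liftSteps (T : ι → Set S) :
    Finset ι → List (A × S) → List (A × (S × Finset ι))
  | _, [] => []
  | v, (a, s') :: l => (a, (s', v ∪ targetsAt T s')) :: liftSteps T (v ∪ targetsAt T s') l

noncomputable def liftHist (T : ι → Set S) (π : Hist S A) : Hist (S × Finset ι) A :=
  ((π.1, targetsAt T π.1), liftSteps T (targetsAt T π.1) π.2)

def projHist {V : Type*} (π : Hist (S × V) A) : Hist S A :=
  (π.1.1, π.2.map fun x => (x.1, x.2.1))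

lemma last_liftSteps (l : List (A × S)) (s₀ : S) (v : Finset ι) :
    Hist.last (((s₀, v), liftSteps T v l) : Hist (S × Finset ι) A)
      = (Hist.last ((s₀, l) : Hist S A), visitsAfter T v l) := by
  induction l generalizing s₀ v with
  | nil => rfl
  | cons x l ih =>
    obtain ⟨a, s'⟩ := x
    simp only [liftSteps, visitsAfter, Hist.last_cons, ih]

lemma last_liftHist (π : Hist S A) :
    (liftHist T π).last = (π.last, visitsAfter T (targetsAt T π.1) π.2) :=
  last_liftSteps _ _ _

lemma liftSteps_append_singleton (l : List (A × S)) (v : Finset ι) (a : A) (s' : S) :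
    liftSteps T v (l ++ [(a, s')])
      = liftSteps T v l ++ [(a, (s', visitsAfter T v l ∪ targetsAt T s'))] := by
  induction l generalizing v with
  | nil => rfl
  | cons x l ih =>
    obtain ⟨b, u⟩ := x
    simp only [List.cons_append, liftSteps, visitsAfter, ih]

lemma liftHist_snoc (π : Hist S A) (a : A) (s' : S) :
    liftHist T (π.snoc a s')
      = (liftHist T π).snoc a (s', (liftHist T π).last.2 ∪ targetsAt T s') := by
  simp [liftHist, Hist.snoc, liftSteps_append_singleton, last_liftSteps]

lemma projHist_liftHist (π : Hist S A) : projHist (liftHist T π) = π := by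
  obtain ⟨s₀, l⟩ := π
  suffices ∀ v, (liftSteps T v l).map (fun x => (x.1, x.2.1)) = l from Prod.ext rfl (this _)
  induction l with
  | nil => intro; rfl
  | cons x l ih => intro v; simp [liftSteps, ih]

omit [Fintype ι] in
lemma last_projHist {V : Type*} (π : Hist (S × V) A) : (projHist π).last = π.last.1 := by
  obtain ⟨p₀, l⟩ := π
  cases h : l.getLast? <;> simp_all [projHist, Hist.last, List.getLast?_map]

end VisitHistories

section VisitTracking

variable {S A ι : Type*} [Fintype S] [Fintype A] [Fintype ι]

/-- The product of `M` with the set of targets visited so far. -/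
noncomputable def MDP.withVisits (M : MDP S A) (T : ι → Set S) : MDP (S × Finset ι) A where
  P p a p' := if p'.2 = p.2 ∪ targetsAt T p'.1 then M.P p.1 a p'.1 else 0
  nonneg p a p' := by split; exacts [M.nonneg _ _ _, le_rfl]
  le_one p a p' := by split; exacts [M.le_one _ _ _, zero_le_one]
  sum_cases p a := by simpa [Fintype.sum_prod_type] using M.sum_cases p.1 a
  exists_enabled p := by simpa [Fintype.sum_prod_type] using M.exists_enabled p.1

variable {M : MDP S A} {T : ι → Set S}

lemma MDP.sum_withVisits_P_mul (p : S × Finset ι) (a : A) (f : S × Finset ι → ℝ) :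
    ∑ p', (M.withVisits T).P p a p' * f p'
      = ∑ s', M.P p.1 a s' * f (s', p.2 ∪ targetsAt T s') := by
  simp [MDP.withVisits, Fintype.sum_prod_type, ite_mul]

lemma MDP.enabled_withVisits {p : S × Finset ι} {a : A} :
    (M.withVisits T).enabled p a ↔ M.enabled p.1 a := by
  simpa [MDP.enabled] using iff_of_eq (congrArg (· = (1 : ℝ))
    (MDP.sum_withVisits_P_mul (M := M) (T := T) p a fun _ => 1))

lemma MDP.subset_of_withVisits_P_ne_zero {p p' : S × Finset ι} {a : A}
    (h : (M.withVisits T).P p a p' ≠ 0) : p.2 ⊆ p'.2 := by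
  by_contra hsub
  exact h (if_neg fun (heq : p'.2 = p.2 ∪ targetsAt T p'.1) =>
    hsub (heq ▸ Finset.subset_union_left))

namespace Scheduler

def pushVisits (T : ι → Set S) (σ : Scheduler M) : Scheduler (M.withVisits T) where
  choice π := σ.choice (projHist π)
  nonneg π := σ.nonneg _
  sum_one π := σ.sum_one _
  supp π a h := σ.supp _ a (by rwa [last_projHist, ← MDP.enabled_withVisits])

noncomputable def pullVisits (τ : Scheduler (M.withVisits T)) : Scheduler M where
  choice π := τ.choice (liftHist T π)
  nonneg π := τ.nonneg _
  sum_one π := τ.sum_one _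
  supp π a h := τ.supp _ a (by rwa [last_liftHist, MDP.enabled_withVisits])

end Scheduler

/-- `hπ` says that `i` is not visited before the last state of `π`: `reachN` only looks ahead,
while the visited sets remember the past. -/
lemma reachN_eq_reachN_withVisits {σ : Scheduler M} {τ : Scheduler (M.withVisits T)}
    (hστ : ∀ π, τ.choice (liftHist T π) = σ.choice π) (i : ι) (n : ℕ) {π : Hist S A}
    (hπ : i ∈ (liftHist T π).last.2 ↔ π.last ∈ T i) :
    reachN M σ (T i) n π = reachN (M.withVisits T) τ {p | i ∈ p.2} n (liftHist T π) := by
  induction n generalizing π with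
  | zero => simp only [reachN, Set.mem_ofPred_eq, hπ]
  | succ n ih =>
    rw [reachN_succ, reachN_succ]
    simp only [Set.mem_ofPred_eq, hπ, hστ]
    split
    · rfl
    · rename_i hi
      have hv : i ∉ (liftHist T π).last.2 := fun h => hi (hπ.1 h)
      have hlast : (liftHist T π).last.1 = π.last := by rw [last_liftHist]
      refine Finset.sum_congr rfl fun a _ => congrArg _ ?_
      rw [MDP.sum_withVisits_P_mul, hlast]
      refine Finset.sum_congr rfl fun s' _ => congrArg _ ?_
      rw [ih (by simp [liftHist_snoc, mem_targetsAt, hv]), liftHist_snoc, last_liftHist]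

lemma Pr_eq_Pr_withVisits {σ : Scheduler M} {τ : Scheduler (M.withVisits T)}
    (hστ : ∀ π, τ.choice (liftHist T π) = σ.choice π) (i : ι) (s : S) :
    Pr M σ s (T i) = Pr (M.withVisits T) τ (s, targetsAt T s) {p | i ∈ p.2} := by
  unfold Pr
  congr! 2 with n
  exact reachN_eq_reachN_withVisits hστ i n mem_targetsAt

end VisitTracking

section WeightedReachability

variable {S A ι : Type*} [Fintype S] [Fintype A] [Fintype ι] {M : MDP S A} {T : ι → Set S}

def visitReward (w : ι → ℝ) (p p' : S × Finset ι) : ℝ := ∑ i ∈ p'.2, w i - ∑ i ∈ p.2, w i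

lemma sum_mul_discReachN_eq_add_of_subset {M' : MDP (S × Finset ι) A} (w : ι → ℝ)
    (τ : Scheduler M') (γ : ℝ) (n : ℕ) {v : Finset ι} {π : Hist (S × Finset ι) A}
    (hv : v ⊆ π.last.2) :
    ∑ i, w i * discReachN M' τ {p | i ∈ p.2} γ n π
      = ∑ i ∈ v, w i + ∑ i ∈ vᶜ, w i * discReachN M' τ {p | i ∈ p.2} γ n π := by
  rw [← Finset.sum_add_sum_compl v]
  congr 1
  exact Finset.sum_congr rfl fun i hi => by
    rw [discReachN_of_mem _ _ (show π.last ∈ {p | i ∈ p.2} from hv hi), mul_one]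

/-- The rewards telescope because visited sets only grow along transitions. -/
lemma sum_mul_discReachN_withVisits (w : ι → ℝ) (τ : Scheduler (M.withVisits T)) (γ : ℝ)
    (n : ℕ) (π : Hist (S × Finset ι) A) :
    ∑ i, w i * discReachN (M.withVisits T) τ {p | i ∈ p.2} γ n π
      = ∑ i ∈ π.last.2, w i + discRewardN (M.withVisits T) τ (visitReward w) γ n π := by
  induction n generalizing π with
  | zero => simp [discReachN, discRewardN, Finset.sum_ite_mem]
  | succ n ih =>
    set v := π.last.2
    have hstep : ∀ a p', (M.withVisits T).P π.last a p' * (visitReward w π.last p'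
        + discRewardN (M.withVisits T) τ (visitReward w) γ n (π.snoc a p'))
        = (M.withVisits T).P π.last a p' * ∑ i ∈ vᶜ, w i *
          discReachN (M.withVisits T) τ {p | i ∈ p.2} γ n (π.snoc a p') := by
      intro a p'
      by_cases hP : (M.withVisits T).P π.last a p' = 0
      · rw [hP, zero_mul, zero_mul]
      have := ih (π.snoc a p')
      rw [sum_mul_discReachN_eq_add_of_subset w τ γ n
        (by simpa using MDP.subset_of_withVisits_P_ne_zero hP), Hist.last_snoc] at this
      rw [visitReward]
      congr 1
      linarith
    rw [sum_mul_discReachN_eq_add_of_subset w τ γ (n + 1) subset_rfl, discRewardN,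
      add_left_cancel_iff]
    have hvc : ∀ i ∈ vᶜ, w i * discReachN (M.withVisits T) τ {p | i ∈ p.2} γ (n + 1) π
        = ∑ a, ∑ p', γ * (τ.choice π a * ((M.withVisits T).P π.last a p' *
          (w i * discReachN (M.withVisits T) τ {p | i ∈ p.2} γ n (π.snoc a p')))) := by
      intro i hi
      rw [discReachN_succ, if_neg (show π.last ∉ {p | i ∈ p.2} from Finset.mem_compl.1 hi)]
      simp only [Finset.mul_sum]
      exact Finset.sum_congr rfl fun a _ => Finset.sum_congr rfl fun p' _ => by ring
    simp only [hstep, Finset.mul_sum]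
    rw [Finset.sum_congr rfl hvc, Finset.sum_comm]
    exact Finset.sum_congr rfl fun a _ => Finset.sum_comm

lemma tendsto_discRewardN_withVisits (w : ι → ℝ) (τ : Scheduler (M.withVisits T)) {γ : ℝ}
    (hγ₀ : 0 ≤ γ) (hγ₁ : γ ≤ 1) (p₀ : S × Finset ι) :
    Tendsto (fun n => discRewardN (M.withVisits T) τ (visitReward w) γ n (p₀, [])) atTop
      (𝓝 (∑ i, w i * discPr (M.withVisits T) τ p₀ {p | i ∈ p.2} γ - ∑ i ∈ p₀.2, w i)) := by
  have h := (tendsto_finsetSum Finset.univ fun i _ =>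
    (tendsto_discReachN_discPr τ {p | i ∈ p.2} hγ₀ hγ₁ p₀).const_mul (w i)).sub_const
      (∑ i ∈ p₀.2, w i)
  refine h.congr fun n => ?_
  rw [sum_mul_discReachN_withVisits, Hist.last_nil, add_sub_cancel_left]

lemma exists_selector_discPr_optimal (w : ι → ℝ) (p₀ : S × Finset ι) {γ : ℝ}
    (hγ : γ ∈ Set.Ico 0 1) : ∃ f : (M.withVisits T).Selector, ∀ τ,
      ∑ i, w i * discPr (M.withVisits T) τ p₀ {p | i ∈ p.2} γ
        ≤ ∑ i, w i * discPr (M.withVisits T) (Scheduler.ofSelector f) p₀ {p | i ∈ p.2} γ := by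
  obtain ⟨f, hlim⟩ := exists_selector_tendsto_optValue (M := M.withVisits T)
    (r := visitReward w) hγ
  refine ⟨f, fun τ => ?_⟩
  have hτ := le_optValue_of_tendsto hγ (tendsto_discRewardN_withVisits w τ hγ.1 hγ.2.le p₀)
  have hf := tendsto_nhds_unique
    (tendsto_discRewardN_withVisits w (Scheduler.ofSelector f) hγ.1 hγ.2.le p₀) (hlim (p₀, []))
  rw [Hist.last_nil] at hτ hf
  linarith

/-- Blackwell's argument: there are finitely many memoryless deterministic schedulers, so one
of them is optimal for discount factors arbitrarily close to `1`. -/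
theorem exists_selector_optimal_withVisits (w : ι → ℝ) (p₀ : S × Finset ι) :
    ∃ f : (M.withVisits T).Selector, ∀ τ,
      ∑ i, w i * Pr (M.withVisits T) τ p₀ {p | i ∈ p.2}
        ≤ ∑ i, w i * Pr (M.withVisits T) (Scheduler.ofSelector f) p₀ {p | i ∈ p.2} := by
  have hdisc := Filter.eventually_of_mem (Ico_mem_nhdsLT zero_lt_one) fun γ hγ =>
    exists_selector_discPr_optimal (M := M) (T := T) w p₀ hγ
  obtain ⟨f, hf⟩ := Filter.frequently_exists.1 hdisc.frequently
  have hlim : ∀ τ : Scheduler (M.withVisits T), Tendsto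
      (fun γ => ∑ i, w i * discPr (M.withVisits T) τ p₀ {p | i ∈ p.2} γ) (𝓝[<] 1)
      (𝓝 (∑ i, w i * Pr (M.withVisits T) τ p₀ {p | i ∈ p.2})) := fun τ =>
    tendsto_finsetSum _ fun i _ => (tendsto_discPr_nhdsLT_one τ _ p₀).const_mul (w i)
  exact ⟨f, fun τ => le_of_tendsto_of_tendsto_of_frequently (hlim τ) (hlim _)
    (hf.mono fun γ h => h τ)⟩

theorem exists_forall_sum_mul_Pr_le (M : MDP S A) (T : ι → Set S) (w : ι → ℝ) (s : S) :
    ∃ σ₀ : Scheduler M, ∀ σ : Scheduler M,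
      ∑ i, w i * Pr M σ s (T i) ≤ ∑ i, w i * Pr M σ₀ s (T i) := by
  obtain ⟨f, hf⟩ := exists_selector_optimal_withVisits (M := M) (T := T) w (s, targetsAt T s)
  refine ⟨(Scheduler.ofSelector f).pullVisits, fun σ => ?_⟩
  have hpush : ∀ π, (σ.pushVisits T).choice (liftHist T π) = σ.choice π := fun π => by
    simp [Scheduler.pushVisits, projHist_liftHist]
  have hpull : ∀ π, (Scheduler.ofSelector f).choice (liftHist T π)
      = (Scheduler.ofSelector f).pullVisits.choice π := fun _ => rfl
  simp only [Pr_eq_Pr_withVisits hpush, Pr_eq_Pr_withVisits hpull]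
  exact hf _

end WeightedReachability

section Relational

variable {S A : Type*} [Fintype S] [Fintype A] {m n : ℕ} (M : MDP S A) (q : Fin m → ℚ)
  (s : Fin m → S) (k : Fin m → Fin n) (T : Fin m → Set S)

lemma combVal_eq_sum_mul_Pr (σ : Scheduler M) (c : S × Fin n) :
    combVal M q s k T σ c
      = ∑ i, (if (s i, k i) = c then (q i : ℝ) else 0) * Pr M σ c.1 (T i) := by
  simp only [combVal, ite_mul, zero_mul, Finset.sum_ite, Finset.sum_const_zero, add_zero]

lemma exists_isGreatest_combVal (c : S × Fin n) : ∃ σ : Scheduler M, IsGreatest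
    {x : ℝ | ∃ σ' : Scheduler M, x = combVal M q s k T σ' c} (combVal M q s k T σ c) := by
  obtain ⟨σ, hσ⟩ := exists_forall_sum_mul_Pr_le M T
    (fun i => if (s i, k i) = c then (q i : ℝ) else 0) c.1
  refine ⟨σ, ⟨σ, rfl⟩, ?_⟩
  rintro _ ⟨σ', rfl⟩
  simpa only [combVal_eq_sum_mul_Pr] using hσ σ'

lemma exists_isLeast_combVal (c : S × Fin n) : ∃ σ : Scheduler M, IsLeast
    {x : ℝ | ∃ σ' : Scheduler M, x = combVal M q s k T σ' c} (combVal M q s k T σ c) := by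
  obtain ⟨σ, hσ⟩ := exists_forall_sum_mul_Pr_le M T
    (fun i => -(if (s i, k i) = c then (q i : ℝ) else 0)) c.1
  refine ⟨σ, ⟨σ, rfl⟩, ?_⟩
  rintro _ ⟨σ', rfl⟩
  have := hσ σ'
  simp only [neg_mul, Finset.sum_neg_distrib, neg_le_neg_iff] at this
  simpa only [combVal_eq_sum_mul_Pr] using this

lemma sum_mul_Pr_eq_sum_combVal (σ : Fin n → Scheduler M) :
    ∑ i, (q i : ℝ) * Pr M (σ (k i)) (s i) (T i)
      = ∑ c ∈ combSet s k, combVal M q s k T (σ c.2) c := by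
  rw [← Finset.sum_fiberwise_of_maps_to (g := fun i => (s i, k i))
    fun i _ => Finset.mem_image_of_mem _ (Finset.mem_univ i)]
  refine Finset.sum_congr rfl fun c _ => Finset.sum_congr rfl fun i hi => ?_
  obtain rfl := (Finset.mem_filter.1 hi).2
  rfl

lemma sum_combVal_mem_achSet (F : S × Fin n → Scheduler M) :
    ∑ c ∈ combSet s k, combVal M q s k T (F c) c ∈ achSet M q s k T := by
  refine ⟨fun j => Scheduler.byInitial fun st => F (st, j), ?_⟩
  rw [sum_mul_Pr_eq_sum_combVal M q s k T fun j => Scheduler.byInitial fun st => F (st, j)]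
  refine Finset.sum_congr rfl fun c _ => Finset.sum_congr rfl fun i _ => ?_
  rw [Pr_byInitial]

lemma isLeast_achSet {F : S × Fin n → Scheduler M} (hF : ∀ c, IsLeast
    {x : ℝ | ∃ σ : Scheduler M, x = combVal M q s k T σ c} (combVal M q s k T (F c) c)) :
    IsLeast (achSet M q s k T) (∑ c ∈ combSet s k, combVal M q s k T (F c) c) := by
  refine ⟨sum_combVal_mem_achSet M q s k T F, ?_⟩
  rintro _ ⟨σ, rfl⟩
  rw [sum_mul_Pr_eq_sum_combVal]
  exact Finset.sum_le_sum fun c _ => (hF c).2 ⟨σ c.2, rfl⟩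

lemma isGreatest_achSet {F : S × Fin n → Scheduler M} (hF : ∀ c, IsGreatest
    {x : ℝ | ∃ σ : Scheduler M, x = combVal M q s k T σ c} (combVal M q s k T (F c) c)) :
    IsGreatest (achSet M q s k T) (∑ c ∈ combSet s k, combVal M q s k T (F c) c) := by
  refine ⟨sum_combVal_mem_achSet M q s k T F, ?_⟩
  rintro _ ⟨σ, rfl⟩
  rw [sum_mul_Pr_eq_sum_combVal]
  exact Finset.sum_le_sum fun c _ => (hF c).2 ⟨σ c.2, rfl⟩

lemma convex_achSet : Convex ℝ (achSet M q s k T) := by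
  rintro _ ⟨σ, rfl⟩ _ ⟨τ, rfl⟩ a b ha hb hab
  have ht : a ∈ Set.Icc (0 : ℝ) 1 := ⟨ha, by linarith⟩
  refine ⟨fun j => (σ j).mix (τ j) ht, ?_⟩
  simp only [Pr_mix, smul_eq_mul, Finset.mul_sum, ← Finset.sum_add_distrib, ← eq_sub_of_add_eq' hab]
  exact Finset.sum_congr rfl fun i _ => by ring

end Relational

theorem achievable_set_is_closed_interval_general
    {S A : Type*} [Fintype S] [Fintype A]
    (M : MDP S A) {m n : ℕ}
    (q : Fin m → ℚ) (s : Fin m → S) (k : Fin m → Fin n)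
    (T : Fin m → Set S) :
    (∀ c ∈ combSet s k, ∃ σ : Scheduler M,
        combVal M q s k T σ c =
          sInf {x : ℝ | ∃ σ' : Scheduler M, x = combVal M q s k T σ' c}) ∧
    (∀ c ∈ combSet s k, ∃ σ : Scheduler M,
        combVal M q s k T σ c =
          sSup {x : ℝ | ∃ σ' : Scheduler M, x = combVal M q s k T σ' c}) ∧
    IsLeast (achSet M q s k T) (vMin M q s k T) ∧
    IsGreatest (achSet M q s k T) (vMax M q s k T) ∧
    achSet M q s k T = Set.Icc (vMin M q s k T) (vMax M q s k T) := by
  choose σmin hmin using exists_isLeast_combVal M q s k T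
  choose σmax hmax using exists_isGreatest_combVal M q s k T
  have hleast : IsLeast (achSet M q s k T) (vMin M q s k T) := by
    rw [vMin, Finset.sum_congr rfl fun c _ => (hmin c).csInf_eq]
    exact isLeast_achSet M q s k T hmin
  have hgreatest : IsGreatest (achSet M q s k T) (vMax M q s k T) := by
    rw [vMax, Finset.sum_congr rfl fun c _ => (hmax c).csSup_eq]
    exact isGreatest_achSet M q s k T hmax
  refine ⟨fun c _ => ⟨σmin c, (hmin c).csInf_eq.symm⟩, fun c _ => ⟨σmax c, (hmax c).csSup_eq.symm⟩,
    hleast, hgreatest, ?_⟩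
  exact Set.Subset.antisymm (fun x hx => Set.mem_Icc.2 ⟨hleast.2 hx, hgreatest.2 hx⟩)
    ((convex_achSet M q s k T).ordConnected.out hleast.1 hgreatest.1)

/-- For a relational reachability instance, the inner optima defining
`v^min` and `v^max` are attained, `v^min` is the minimum and `v^max` the maximum of the
achievable value set `A`, and `A` equals the closed interval `[v^min, v^max]`. -/
theorem achievable_set_is_closed_interval
    {S A : Type*} [Fintype S] [Fintype A] [Nonempty S] [Nonempty A]
    (M : MDP S A) {m n : ℕ} (hn : 1 ≤ n) (hmn : n ≤ m)
    (q : Fin m → ℚ) (s : Fin m → S) (k : Fin m → Fin n)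
    (hk : Function.Surjective k) (T : Fin m → Set S) :
    (∀ c ∈ combSet s k, ∃ σ : Scheduler M,
        combVal M q s k T σ c =
          sInf {x : ℝ | ∃ σ' : Scheduler M, x = combVal M q s k T σ' c}) ∧
    (∀ c ∈ combSet s k, ∃ σ : Scheduler M,
        combVal M q s k T σ c =
          sSup {x : ℝ | ∃ σ' : Scheduler M, x = combVal M q s k T σ' c}) ∧
    IsLeast (achSet M q s k T) (vMin M q s k T) ∧
    IsGreatest (achSet M q s k T) (vMax M q s k T) ∧
    achSet M q s k T = Set.Icc (vMin M q s k T) (vMax M q s k T) :=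
  achievable_set_is_closed_interval_general M q s k T
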